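/- arXiv:0808.0724 — 6 statements merged into one kernel-verified Lean document; each statement's English description precedes it below -/
import Mathlib

section
/- Assume: (i) every η ∈ E^{k+1} that is d-exact in F^{k+1} (η = dy for some y ∈ F^k) satisfies η = dε for some ε ∈ E^k; and (ii) every w ∈ F^k with dw = 0 can be written as w = η + dc with η ∈ E^k, dη = 0, and c ∈ F^{k−1}. Let a ∈ F^k be a spark with da = e − r where r = ds' for some s' ∈ I^k (i.e. δ₂ of its class vanishes). Then there exist a'' ∈ E^k, b ∈ F^{k−1}, and s ∈ I^k with a = a'' + db + s and da'' ∈ E^{k+1}; that is, the spark class of a is represented by an element of E^k. -/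
/-!
STATEMENT 3: If (i) every element of `E^{k+1}` that is `d`-exact in `F^{k+1}` is of the
form `dε` with `ε ∈ E^k`, and (ii) every closed `w ∈ F^k` is `η + dc` with `η ∈ E^k`
closed and `c ∈ F^{k-1}`, then a spark `a ∈ F^k` with `da = e - ds'` (`s' ∈ I^k`)
is equivalent to a spark in `E^k`: `a = a'' + db + s` with `a'' ∈ E^k`, `da'' ∈ E^{k+1}`,
`b ∈ F^{k-1}`, `s ∈ I^k`.  (Here `k = j+1`.)
-/

theorem spark_class_representable_in_E
    {F : ℤ → Type*} [∀ k, AddCommGroup (F k)]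
    (d : ∀ k : ℤ, F k →+ F (k + 1))
    (hdd : ∀ (k : ℤ) (x : F k), d (k + 1) (d k x) = 0)
    (E I : ∀ k : ℤ, AddSubgroup (F k))
    (hdE : ∀ k : ℤ, ∀ x ∈ E k, d k x ∈ E (k + 1))
    (hdI : ∀ k : ℤ, ∀ x ∈ I k, d k x ∈ I (k + 1))
    (hEI : ∀ k : ℤ, 0 < k → ∀ x : F k, x ∈ E k → x ∈ I k → x = 0)
    (hneg : ∀ k : ℤ, k < 0 → ∀ x : F k, x = 0)
    (j : ℤ)
    (hinj : ∀ η ∈ E (j + 1 + 1), (∃ y : F (j + 1), η = d (j + 1) y) →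
      ∃ ε ∈ E (j + 1), η = d (j + 1) ε)
    (hsurj : ∀ w : F (j + 1), d (j + 1) w = 0 →
      ∃ η ∈ E (j + 1), d (j + 1) η = 0 ∧ ∃ c : F j, w = η + d j c)
    (a : F (j + 1)) (e : F (j + 1 + 1)) (he : e ∈ E (j + 1 + 1))
    (s' : F (j + 1)) (hs' : s' ∈ I (j + 1))
    (hda : d (j + 1) a = e - d (j + 1) s') :
    ∃ a'' ∈ E (j + 1), ∃ b : F j, ∃ s ∈ I (j + 1),
      a = a'' + d j b + s ∧ d (j + 1) a'' ∈ E (j + 1 + 1) := by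
  obtain ⟨ε, hε, heε⟩ := hinj e he ⟨a + s', by simp [hda]⟩
  have hw : d (j + 1) (a + s' - ε) = 0 := by
    simp [hda, ← heε]
  obtain ⟨η, hη, hηc, c, hc⟩ := hsurj (a + s' - ε) hw
  refine ⟨ε + η, add_mem hε hη, c, -s', neg_mem hs', ?_, ?_⟩
  · have := hc; linear_combination (norm := abel) this
  · simp [map_add, hηc, ← heε, he]
end

section
/- Let (F^*, E^*, I^*) and (F̄^*, E^*, Ī^*) be two homological spark complexes with the same E^*, where each F^k is a subgroup of F̄^k and each I^k a subgroup of Ī^k, all inclusions commuting with the differentials, and where both inclusions E^* ↪ F^* and E^* ↪ F̄^* induce isomorphisms on cohomology (elementwise, in every degree: every d-closed element of F^k, resp. F̄^k, is a d-closed element of E^k plus a d-exact element, and every element of E^k that is d-exact in F^k, resp. F̄^k, is d-exact in E^k). Assume the inclusion I^* ↪ Ī^* induces an isomorphism on cohomology: every ρ ∈ Ī^k with dρ = 0 equals r + dσ for some r ∈ I^k with dr = 0 and σ ∈ Ī^{k−1}, and every r ∈ I^k with dr = 0 that is d-exact in Ī^k is d-exact in I^k. Then for every k the natural map sending the equivalence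 class of a spark a ∈ F^k (for the complex (F^*, E^*, I^*)) to its equivalence class as a spark for (F̄^*, E^*, Ī^*) is a group isomorphism between the two groups of spark classes of degree k. -/
/-!
STATEMENT 4: A quasi-isomorphism of homological spark complexes `(F^*, E^*, I^*)` and
`(F̄^*, E^*, Ī^*)` (same `E^*`, `F^k ≤ F̄^k`, `I^k ≤ Ī^k`, both inclusions of `E^*` being
elementwise isomorphisms on cohomology, and `I^* ↪ Ī^*` an elementwise isomorphism on
cohomology) induces, in every degree `k = j+1`, a group isomorphism between the groups of
spark classes, given by the natural map on representatives.

We work inside the ambient groups `F̄^k`: the subcomplexes are given by families of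
subgroups, and for the big complex the family of "F"-subgroups is `⊤`.
-/

/-- The subgroup of sparks of degree `j+1` of the spark complex whose groups are the
subgroups `F k`, `E k`, `I k` of the ambient groups `FB k`: elements `a ∈ F (j+1)` with
`d a = e - r` for some `e ∈ E (j+2)`, `r ∈ I (j+2)`, i.e. `d a ∈ E (j+2) ⊔ I (j+2)`. -/
abbrev sparkSubgroup {FB : ℤ → Type*} [∀ k, AddCommGroup (FB k)]
    (d : ∀ k : ℤ, FB k →+ FB (k + 1)) (F E I : ∀ k : ℤ, AddSubgroup (FB k)) (j : ℤ) :
    AddSubgroup (FB (j + 1)) :=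
  F (j + 1) ⊓ (E (j + 1 + 1) ⊔ I (j + 1 + 1)).comap (d (j + 1))

/-- The subgroup of "trivial" sparks of degree `j+1`: elements of the form `d b + s`
with `b ∈ F j` and `s ∈ I (j+1)`.  Two sparks are equivalent iff their difference lies
in this subgroup. -/
abbrev sparkTrivial {FB : ℤ → Type*} [∀ k, AddCommGroup (FB k)]
    (d : ∀ k : ℤ, FB k →+ FB (k + 1)) (F I : ∀ k : ℤ, AddSubgroup (FB k)) (j : ℤ) :
    AddSubgroup (FB (j + 1)) :=
  (F j).map (d j) ⊔ I (j + 1)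

/-- The group of spark classes of degree `j+1`: sparks modulo trivial sparks. -/
abbrev sparkClasses {FB : ℤ → Type*} [∀ k, AddCommGroup (FB k)]
    (d : ∀ k : ℤ, FB k →+ FB (k + 1)) (F E I : ∀ k : ℤ, AddSubgroup (FB k)) (j : ℤ) :
    Type _ :=
  sparkSubgroup d F E I j ⧸ (sparkTrivial d F I j).addSubgroupOf (sparkSubgroup d F E I j)

theorem quasiIso_induces_iso_of_sparkClasses
    {FB : ℤ → Type*} [∀ k, AddCommGroup (FB k)]
    (d : ∀ k : ℤ, FB k →+ FB (k + 1))
    (hdd : ∀ (k : ℤ) (x : FB k), d (k + 1) (d k x) = 0)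
    (F E I IB : ∀ k : ℤ, AddSubgroup (FB k))
    (hEF : ∀ k : ℤ, E k ≤ F k) (hIF : ∀ k : ℤ, I k ≤ F k) (hIIB : ∀ k : ℤ, I k ≤ IB k)
    (hdF : ∀ k : ℤ, ∀ x ∈ F k, d k x ∈ F (k + 1))
    (hdE : ∀ k : ℤ, ∀ x ∈ E k, d k x ∈ E (k + 1))
    (hdI : ∀ k : ℤ, ∀ x ∈ I k, d k x ∈ I (k + 1))
    (hdIB : ∀ k : ℤ, ∀ x ∈ IB k, d k x ∈ IB (k + 1))
    (hEI : ∀ k : ℤ, 0 < k → ∀ x : FB k, x ∈ E k → x ∈ I k → x = 0)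
    (hEIB : ∀ k : ℤ, 0 < k → ∀ x : FB k, x ∈ E k → x ∈ IB k → x = 0)
    (hneg : ∀ k : ℤ, k < 0 → ∀ x : FB k, x = 0)
    -- `E^* ↪ F^*` is an elementwise isomorphism on cohomology:
    (hEFsurj : ∀ k : ℤ, ∀ x ∈ F (k + 1), d (k + 1) x = 0 →
      ∃ η ∈ E (k + 1), d (k + 1) η = 0 ∧ ∃ y ∈ F k, x = η + d k y)
    (hEFinj : ∀ k : ℤ, ∀ η ∈ E (k + 1), (∃ y ∈ F k, η = d k y) →
      ∃ ε ∈ E k, η = d k ε)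
    -- `E^* ↪ F̄^*` is an elementwise isomorphism on cohomology:
    (hEFBsurj : ∀ k : ℤ, ∀ x : FB (k + 1), d (k + 1) x = 0 →
      ∃ η ∈ E (k + 1), d (k + 1) η = 0 ∧ ∃ y : FB k, x = η + d k y)
    (hEFBinj : ∀ k : ℤ, ∀ η ∈ E (k + 1), (∃ y : FB k, η = d k y) →
      ∃ ε ∈ E k, η = d k ε)
    -- `I^* ↪ Ī^*` induces an isomorphism on cohomology:
    (hIsurj : ∀ k : ℤ, ∀ ρ ∈ IB (k + 1), d (k + 1) ρ = 0 →
      ∃ r ∈ I (k + 1), d (k + 1) r = 0 ∧ ∃ σ ∈ IB k, ρ = r + d k σ)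
    (hIinj : ∀ k : ℤ, ∀ r ∈ I (k + 1), d (k + 1) r = 0 →
      (∃ σ ∈ IB k, r = d k σ) → ∃ τ ∈ I k, r = d k τ)
    (j : ℤ) :
    ∃ φ : sparkClasses d F E I j ≃+ sparkClasses d (fun _ => ⊤) E IB j,
      ∀ (a : FB (j + 1)) (ha : a ∈ sparkSubgroup d F E I j)
        (ha' : a ∈ sparkSubgroup d (fun _ => ⊤) E IB j),
        φ (QuotientAddGroup.mk ⟨a, ha⟩) = QuotientAddGroup.mk ⟨a, ha'⟩ := by

  classical
  -- inclusion of spark subgroups and of trivial subgroups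
  have hST : sparkSubgroup d F E I j ≤ sparkSubgroup d (fun _ => ⊤) E IB j := by
    intro x hx
    rw [AddSubgroup.mem_inf] at hx ⊢
    exact ⟨AddSubgroup.mem_top x,
      AddSubgroup.comap_mono (sup_le_sup_left (hIIB _) _) hx.2⟩
  have hTriv : sparkTrivial d F I j ≤ sparkTrivial d (fun _ => ⊤) IB j :=
    sup_le_sup (AddSubgroup.map_mono le_top) (hIIB _)
  -- key lemma: a closed element of F^(j+1) which is exact in FB is exact in F
  have hFexact : ∀ x : FB (j + 1), x ∈ F (j + 1) → d (j + 1) x = 0 →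
      (∃ w : FB j, x = d j w) → ∃ y ∈ F j, x = d j y := by
    rintro x hxF hxcl ⟨w, hw⟩
    obtain ⟨η, hη, hηcl, y₀, hy₀, hxeq⟩ := hEFsurj j x hxF hxcl
    obtain ⟨ε, hε, hεeq⟩ := hEFBinj j η hη ⟨w - y₀, by rw [map_sub, ← hw, hxeq]; abel⟩
    exact ⟨ε + y₀, add_mem (hEF j hε) hy₀, by rw [map_add, ← hεeq]; exact hxeq⟩
  -- injectivity on representatives
  have hinj_rep : ∀ a : FB (j + 1), a ∈ sparkSubgroup d F E I j →
      a ∈ sparkTrivial d (fun _ => ⊤) IB j → a ∈ sparkTrivial d F I j := by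
    intro a ha hatriv
    by_cases hjneg : j + 1 < 0
    · rw [hneg (j + 1) hjneg a]; exact zero_mem _
    rw [AddSubgroup.mem_inf, AddSubgroup.mem_comap, AddSubgroup.mem_sup] at ha
    obtain ⟨haF, e, he, i, hi, hda⟩ := ha
    rw [AddSubgroup.mem_sup] at hatriv
    obtain ⟨b', hb', s, hs, habs⟩ := hatriv
    rw [AddSubgroup.mem_map] at hb'
    obtain ⟨b, -, hb⟩ := hb'
    have hdas : d (j + 1) a = d (j + 1) s := by
      rw [← habs, ← hb, map_add, hdd j b, zero_add]
    have he0 : e = 0 := by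
      apply hEIB (j + 1 + 1) (by omega) e he
      have hee : e = d (j + 1) s + -i := by rw [← hdas, ← hda]; abel
      rw [hee]; exact add_mem (hdIB _ s hs) (neg_mem (hIIB _ hi))
    have hdai : d (j + 1) a = i := by rw [← hda, he0, zero_add]
    have hicl : d (j + 1 + 1) i = 0 := by rw [← hdai]; exact hdd _ a
    obtain ⟨τ, hτ, hτeq⟩ := hIinj (j + 1) i hi hicl ⟨s, hs, by rw [← hdai, hdas]⟩
    have hdx : d (j + 1) (a - τ) = 0 := by rw [map_sub, hdai, ← hτeq, sub_self]
    have hst_cl : d (j + 1) (s - τ) = 0 := by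
      rw [map_sub, ← hdas, hdai, ← hτeq, sub_self]
    obtain ⟨r', hr', hr'cl, σ', hσ', hstτ⟩ :=
      hIsurj j (s - τ) (sub_mem hs (hIIB _ hτ)) hst_cl
    have hxr' : (a - τ) - r' = d j (b + σ') := by
      have h2 : d j σ' = s - τ - r' := by rw [hstτ]; abel
      rw [map_add, ← habs, ← hb, h2]; abel
    obtain ⟨y', hy', hy'eq⟩ := hFexact ((a - τ) - r')
      (sub_mem (sub_mem haF (hIF _ hτ)) (hIF _ hr'))
      (by rw [map_sub, hdx, hr'cl, sub_self]) ⟨b + σ', hxr'⟩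
    rw [AddSubgroup.mem_sup]
    refine ⟨d j y', AddSubgroup.mem_map.2 ⟨y', hy', rfl⟩, r' + τ, add_mem hr' hτ, ?_⟩
    rw [← hy'eq]; abel
  -- surjectivity on representatives
  have hsurj_rep : ∀ a : FB (j + 1), a ∈ sparkSubgroup d (fun _ => ⊤) E IB j →
      ∃ a' ∈ sparkSubgroup d F E I j,
        a - a' ∈ sparkTrivial d (fun _ => ⊤) IB j := by
    intro a ha
    rw [AddSubgroup.mem_inf, AddSubgroup.mem_comap, AddSubgroup.mem_sup] at ha
    obtain ⟨-, e, he, p, hp, hda⟩ := ha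
    have hddap : d (j + 1 + 1) (e + p) = 0 := by rw [hda]; exact hdd _ a
    have hdp : d (j + 1 + 1) p = 0 := by
      by_cases hdeg : j + 1 + 1 < 0
      · rw [hneg _ hdeg p, map_zero]
      · have hde_mem : d (j + 1 + 1) e = -(d (j + 1 + 1) p) := by
          rw [map_add] at hddap
          exact eq_neg_of_add_eq_zero_left hddap
        have hde0 : d (j + 1 + 1) e = 0 :=
          hEIB (j + 1 + 1 + 1) (by omega) _ (hdE _ e he)
            (by rw [hde_mem]; exact neg_mem (hdIB _ p hp))
        rw [hde_mem] at hde0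
        exact neg_eq_zero.mp hde0
    obtain ⟨r, hr, hrcl, σ, hσ, hpeq⟩ := hIsurj (j + 1) p hp hdp
    have hda1 : d (j + 1) (a - σ) = e + r := by rw [map_sub, ← hda, hpeq]; abel
    have hde0 : d (j + 1 + 1) e = 0 := by
      rw [map_add, hdp, add_zero] at hddap; exact hddap
    have hercl : d (j + 1 + 1) (e + r) = 0 := by rw [map_add, hde0, hrcl, add_zero]
    obtain ⟨η, hη, hηcl, y, hy, hereq⟩ :=
      hEFsurj (j + 1) (e + r) (add_mem (hEF _ he) (hIF _ hr)) hercl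
    have hdz : d (j + 1) (a - σ - y) = η := by rw [map_sub, hda1, hereq]; abel
    obtain ⟨ε, hε, hεeq⟩ := hEFBinj (j + 1) η hη ⟨a - σ - y, hdz.symm⟩
    have hdzε : d (j + 1) (a - σ - y - ε) = 0 := by
      rw [map_sub, hdz, ← hεeq, sub_self]
    obtain ⟨η', hη', hη'cl, w, hweq⟩ := hEFBsurj j (a - σ - y - ε) hdzε
    refine ⟨y + ε + η', ?_, ?_⟩
    · rw [AddSubgroup.mem_inf, AddSubgroup.mem_comap, AddSubgroup.mem_sup]
      refine ⟨add_mem (add_mem hy (hEF _ hε)) (hEF _ hη'), e, he, r, hr, ?_⟩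
      rw [map_add, map_add, hη'cl, add_zero, ← hεeq, hereq]; abel
    · rw [AddSubgroup.mem_sup]
      refine ⟨d j w, AddSubgroup.mem_map.2 ⟨w, AddSubgroup.mem_top w, rfl⟩, σ, hσ, ?_⟩
      have h3 : d j w = a - σ - y - ε - η' := by rw [hweq]; abel
      rw [h3]; abel
  -- build the induced homomorphism on quotients
  set N := (sparkTrivial d F I j).addSubgroupOf (sparkSubgroup d F E I j) with hN
  set N' := (sparkTrivial d (fun _ => ⊤) IB j).addSubgroupOf
      (sparkSubgroup d (fun _ => ⊤) E IB j) with hN'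
  let ι : sparkSubgroup d F E I j →+ sparkSubgroup d (fun _ => ⊤) E IB j :=
    AddSubgroup.inclusion hST
  let f : sparkSubgroup d F E I j →+ sparkClasses d (fun _ => ⊤) E IB j :=
    (QuotientAddGroup.mk' N').comp ι
  have hf : ∀ x ∈ N, f x = 0 := by
    intro x hx
    rw [AddSubgroup.mem_addSubgroupOf] at hx
    show ((ι x : sparkSubgroup d (fun _ => ⊤) E IB j) :
      sparkClasses d (fun _ => ⊤) E IB j) = 0
    rw [QuotientAddGroup.eq_zero_iff, AddSubgroup.mem_addSubgroupOf]
    exact hTriv hx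
  let φ : sparkClasses d F E I j →+ sparkClasses d (fun _ => ⊤) E IB j :=
    QuotientAddGroup.lift N f hf
  have hφmk : ∀ x : sparkSubgroup d F E I j,
      φ (QuotientAddGroup.mk x) = QuotientAddGroup.mk (ι x) := fun _ => rfl
  have hφinj : Function.Injective φ := by
    rw [injective_iff_map_eq_zero]
    intro q hq
    induction q using QuotientAddGroup.induction_on with
    | H x =>
      rw [hφmk] at hq
      rw [QuotientAddGroup.eq_zero_iff, AddSubgroup.mem_addSubgroupOf] at hq ⊢
      exact hinj_rep _ x.2 hq
  have hφsurj : Function.Surjective φ := by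
    intro q
    induction q using QuotientAddGroup.induction_on with
    | H x =>
      obtain ⟨a', ha', hdiff⟩ := hsurj_rep (x : FB (j + 1)) x.2
      refine ⟨QuotientAddGroup.mk ⟨a', ha'⟩, ?_⟩
      rw [hφmk, QuotientAddGroup.eq]
      rw [AddSubgroup.mem_addSubgroupOf]
      show -a' + (x : FB (j + 1)) ∈ sparkTrivial d (fun _ => ⊤) IB j
      rw [neg_add_eq_sub]
      exact hdiff
  refine ⟨AddEquiv.ofBijective φ ⟨hφinj, hφsurj⟩, ?_⟩
  intro a ha ha'
  rfl
end

section
/- Let a ∈ A_k, b ∈ A_l, e, r ∈ A_{k+1}, f, s ∈ A_{l+1} with Da = e − r, Db = f − s, Df = 0, and Dr = 0. Then D(a·f + (−1)^{k+1} r·b) = e·f − r·s. (In particular, in a spark-type setting a·f + (−1)^{k+1} r·b satisfies the spark equation with smooth part e·f and integral part r·s.) -/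
/-!
STATEMENT 8: In a graded ring `(A_n)` (formalized as a family of additive subgroups of a
ring `R`, closed under multiplication `A_m · A_n ⊆ A_{m+n}`) with an additive map
`D : R → R` with `D(A_n) ⊆ A_{n+1}` satisfying the graded Leibniz rule, if `a ∈ A_k`,
`b ∈ A l`, `e, r ∈ A_{k+1}`, `f, s ∈ A_{l+1}` with `Da = e − r`, `Db = f − s`, `Df = 0`,
`Dr = 0`, then `D(a·f + (−1)^{k+1} r·b) = e·f − r·s`.
-/

theorem spark_product_equation {R : Type*} [Ring R]
    (A : ℕ → AddSubgroup R) (D : R →+ R)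
    (hD : ∀ n : ℕ, ∀ x ∈ A n, D x ∈ A (n + 1))
    (hmul : ∀ (m n : ℕ), ∀ x ∈ A m, ∀ y ∈ A n, x * y ∈ A (m + n))
    (hleib : ∀ (m n : ℕ), ∀ x ∈ A m, ∀ y ∈ A n,
      D (x * y) = D x * y + ((-1 : ℤ) ^ m) • (x * D y))
    (k l : ℕ) (a b e r f s : R)
    (ha : a ∈ A k) (hb : b ∈ A l) (he : e ∈ A (k + 1)) (hr : r ∈ A (k + 1))
    (hf : f ∈ A (l + 1)) (hs : s ∈ A (l + 1))
    (hDa : D a = e - r) (hDb : D b = f - s) (hDf : D f = 0) (hDr : D r = 0) :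
    D (a * f + ((-1 : ℤ) ^ (k + 1)) • (r * b)) = e * f - r * s := by
  have h1 := hleib k (l + 1) a ha f hf
  have h2 := hleib (k + 1) l r hr b hb
  rw [map_add, map_zsmul, h1, h2, hDa, hDb, hDf, hDr]
  rw [mul_zero, smul_zero, add_zero, zero_mul, zero_add]
  rw [smul_smul, ← pow_add]
  have : (-1 : ℤ) ^ (k + 1 + (k + 1)) = 1 := by
    rw [← two_mul]; exact Even.neg_one_pow ⟨k + 1, by ring⟩
  rw [this, one_smul, sub_mul, mul_sub]
  abel
end

section
/- Let a ∈ A_k, b ∈ A_l, e, r ∈ A_{k+1}, f, s ∈ A_{l+1} with Da = e − r and Db = f − s. Then (a·f + (−1)^{k+1} r·b) − (a·s + (−1)^{k+1} e·b) = (−1)^k D(a·b); hence the two representatives a·f + (−1)^{k+1} r·b and a·s + (−1)^{k+1} e·b of the spark product differ by an exact element. -/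
/-!
STATEMENT 9: In a graded ring `(A_n)` (a family of additive subgroups of a ring `R`,
closed under multiplication) with an additive `D : R → R`, `D(A_n) ⊆ A_{n+1}`, satisfying
the graded Leibniz rule, if `a ∈ A_k`, `b ∈ A_l`, `e, r ∈ A_{k+1}`, `f, s ∈ A_{l+1}` with
`Da = e − r` and `Db = f − s`, then
`(a·f + (−1)^{k+1} r·b) − (a·s + (−1)^{k+1} e·b) = (−1)^k D(a·b)`.
-/

theorem spark_product_representatives_differ_by_exact {R : Type*} [Ring R]
    (A : ℕ → AddSubgroup R) (D : R →+ R)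
    (hD : ∀ n : ℕ, ∀ x ∈ A n, D x ∈ A (n + 1))
    (hmul : ∀ (m n : ℕ), ∀ x ∈ A m, ∀ y ∈ A n, x * y ∈ A (m + n))
    (hleib : ∀ (m n : ℕ), ∀ x ∈ A m, ∀ y ∈ A n,
      D (x * y) = D x * y + ((-1 : ℤ) ^ m) • (x * D y))
    (k l : ℕ) (a b e r f s : R)
    (ha : a ∈ A k) (hb : b ∈ A l) (he : e ∈ A (k + 1)) (hr : r ∈ A (k + 1))
    (hf : f ∈ A (l + 1)) (hs : s ∈ A (l + 1))
    (hDa : D a = e - r) (hDb : D b = f - s) :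
    (a * f + ((-1 : ℤ) ^ (k + 1)) • (r * b)) - (a * s + ((-1 : ℤ) ^ (k + 1)) • (e * b))
      = ((-1 : ℤ) ^ k) • D (a * b) := by
  rw [hleib k l a ha b hb, hDa, hDb]
  have h : ((-1:ℤ)^k) * ((-1:ℤ)^k) = 1 := by
    rw [← pow_add]; exact Even.neg_one_pow ⟨k, rfl⟩
  simp only [smul_add, smul_sub, smul_smul, h, one_smul, mul_sub, sub_mul,
    pow_succ, mul_neg_one, neg_smul]
  abel
end

section
/- Let a, a' ∈ A_k, b ∈ A_l, e, r, r' ∈ A_{k+1}, f, s ∈ A_{l+1}, c ∈ A_{k−1}, t ∈ A_k satisfy Da = e − r, Da' = e − r', Db = f − s, Df = 0, a − a' = Dc + t, and r' − r = Dt. Then (a·f + (−1)^{k+1} r·b) − (a'·f + (−1)^{k+1} r'·b) = D(c·f + (−1)^k t·b) + t·s; hence the spark product is independent of the choice of representative of the first factor. -/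
/-!
STATEMENT 10: In a graded ring `(A_n)` (a family of additive subgroups of a ring `R`
indexed by `ℤ`, with `A_n = 0` for `n < 0`, closed under multiplication) with additive
`D : R → R`, `D(A_n) ⊆ A_{n+1}`, satisfying the graded Leibniz rule: if
`Da = e − r`, `Da' = e − r'`, `Db = f − s`, `Df = 0`, `a − a' = Dc + t`, `r' − r = Dt`
(with `a, a' ∈ A_k`, `b ∈ A_l`, `e, r, r' ∈ A_{k+1}`, `f, s ∈ A_{l+1}`, `c ∈ A_{k−1}`,
`t ∈ A_k`), then
`(a·f + (−1)^{k+1} r·b) − (a'·f + (−1)^{k+1} r'·b) = D(c·f + (−1)^k t·b) + t·s`,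
so the spark product is independent of the representative of the first factor.
-/

theorem spark_product_independent_of_representative {R : Type*} [Ring R]
    (A : ℤ → AddSubgroup R) (D : R →+ R)
    (hneg : ∀ n : ℤ, n < 0 → A n = ⊥)
    (hD : ∀ n : ℤ, ∀ x ∈ A n, D x ∈ A (n + 1))
    (hmul : ∀ (m n : ℤ), ∀ x ∈ A m, ∀ y ∈ A n, x * y ∈ A (m + n))
    (hleib : ∀ (m n : ℤ), ∀ x ∈ A m, ∀ y ∈ A n,
      D (x * y) = D x * y + ((-1 : ℤˣ) ^ m) • (x * D y))
    (k l : ℤ) (hk : 0 ≤ k) (hl : 0 ≤ l)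
    (a a' b e r r' f s c t : R)
    (ha : a ∈ A k) (ha' : a' ∈ A k) (hb : b ∈ A l)
    (he : e ∈ A (k + 1)) (hr : r ∈ A (k + 1)) (hr' : r' ∈ A (k + 1))
    (hf : f ∈ A (l + 1)) (hs : s ∈ A (l + 1))
    (hc : c ∈ A (k - 1)) (ht : t ∈ A k)
    (hDa : D a = e - r) (hDa' : D a' = e - r') (hDb : D b = f - s)
    (hDf : D f = 0) (haa' : a - a' = D c + t) (hrt : r' - r = D t) :
    (a * f + ((-1 : ℤˣ) ^ (k + 1)) • (r * b))
        - (a' * f + ((-1 : ℤˣ) ^ (k + 1)) • (r' * b))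
      = D (c * f + ((-1 : ℤˣ) ^ k) • (t * b)) + t * s := by
  set u : ℤˣ := (-1:ℤˣ)^k with hu
  have hu2 : ∀ x : R, u • u • x = x := fun x => by
    rw [smul_smul, hu, ← zpow_add, Even.neg_one_zpow ⟨k, rfl⟩, one_smul]
  have hk1 : ∀ x : R, ((-1:ℤˣ)^(k+1)) • x = -(u • x) := fun x => by
    rw [zpow_add_one, mul_smul]; simp [hu]
  have hDcf : D (c * f) = D c * f := by
    rw [hleib (k-1) (l+1) c hc f hf, hDf, mul_zero, smul_zero, add_zero]
  have hDtb : D (t * b) = D t * b + u • (t * D b) := hleib k l t ht b hb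
  have hDsmul : D (u • (t*b)) = u • D (t*b) := by
    rw [Units.smul_def, map_zsmul, Units.smul_def]
  rw [map_add, hDcf, hDsmul, hDtb, hk1, hk1, hDb, smul_add, hu2]
  have h1 : a * f - a' * f = (D c + t) * f := by rw [← sub_mul, haa']
  have h2 : u • (r' * b) - u • (r * b) = u • (D t * b) := by
    rw [← smul_sub, ← sub_mul, hrt]
  calc a * f + -(u • (r * b)) - (a' * f + -(u • (r' * b)))
      = (a*f - a'*f) + (u•(r'*b) - u•(r*b)) := by abel
    _ = (D c + t)*f + u•(D t * b) := by rw [h1, h2]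
    _ = D c * f + (u•(D t*b) + t*(f - s)) + t*s := by rw [add_mul, mul_sub]; abel
end

section
/- Assume that the inclusions E^* ↪ F^* induce an isomorphism on cohomology in the following elementwise sense in degrees k and k+1: every η ∈ E^{k+1} with dη = 0 that is d-exact in F^{k+1} is d-exact in E^{k+1}, and every w ∈ F^k with dw = 0 can be written as w = η + dc with η ∈ E^k, dη = 0, c ∈ F^{k−1}. Then a spark class of degree k maps to zero under δ₂ (i.e. admits a representative a with da = e − r where r ∈ d(I^k)) if and only if it is represented by a spark lying in E^k; that is, the kernel of δ₂ : Ĥ^k → H^{k+1}(I^*) equals the subgroup Ĥ^k_E of classes representable by elements of E^k. -/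
/-!
STATEMENT 17: Assume the inclusion `E^* ↪ F^*` induces an isomorphism on cohomology in
degrees `k` and `k+1` (elementwise, as stated in the hypotheses `hinj`, `hsurj`).  Then a
spark class of degree `k` maps to zero under `δ₂` — i.e. its representative `a`, with
`da = e − r`, has `r ∈ d(I^k)` — if and only if it is represented by a spark lying in
`E^k`; that is, `ker δ₂ = Ĥ^k_E`.  (Here `k = j+1`.)
-/

theorem ker_delta2_eq_smooth_classes
    {F : ℤ → Type*} [∀ k, AddCommGroup (F k)]
    (d : ∀ k : ℤ, F k →+ F (k + 1))
    (hdd : ∀ (k : ℤ) (x : F k), d (k + 1) (d k x) = 0)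
    (E I : ∀ k : ℤ, AddSubgroup (F k))
    (hdE : ∀ k : ℤ, ∀ x ∈ E k, d k x ∈ E (k + 1))
    (hdI : ∀ k : ℤ, ∀ x ∈ I k, d k x ∈ I (k + 1))
    (hEI : ∀ k : ℤ, 0 < k → ∀ x : F k, x ∈ E k → x ∈ I k → x = 0)
    (hneg : ∀ k : ℤ, k < 0 → ∀ x : F k, x = 0)
    (j : ℤ) (hj : 0 ≤ j + 1)
    -- every closed `η ∈ E^{k+1}` that is `d`-exact in `F^{k+1}` is `d`-exact in `E^{k+1}`:
    (hinj : ∀ η ∈ E (j + 1 + 1), d (j + 1 + 1) η = 0 →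
      (∃ y : F (j + 1), η = d (j + 1) y) → ∃ ε ∈ E (j + 1), η = d (j + 1) ε)
    -- every closed `w ∈ F^k` is `η + dc` with `η ∈ E^k` closed, `c ∈ F^{k-1}`:
    (hsurj : ∀ w : F (j + 1), d (j + 1) w = 0 →
      ∃ η ∈ E (j + 1), d (j + 1) η = 0 ∧ ∃ c : F j, w = η + d j c)
    (a : F (j + 1)) (e r : F (j + 1 + 1))
    (he : e ∈ E (j + 1 + 1)) (hr : r ∈ I (j + 1 + 1))
    (hda : d (j + 1) a = e - r) :
    -- `δ₂` of the class of `a` vanishes, i.e. `r ∈ d(I^k)` ...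
    (∃ s' ∈ I (j + 1), r = d (j + 1) s') ↔
      -- ... iff the class of `a` is represented by a spark lying in `E^k`:
      (∃ a'' ∈ E (j + 1),
        (∃ e'' ∈ E (j + 1 + 1), ∃ r'' ∈ I (j + 1 + 1), d (j + 1) a'' = e'' - r'') ∧
        ∃ b : F j, ∃ s ∈ I (j + 1), a - a'' = d j b + s) := by
  constructor
  · rintro ⟨s', hs', hrds⟩
    set w : F (j + 1) := a + s' with hw
    have hdw : d (j + 1) w = e := by
      rw [hw, map_add, hda, ← hrds]; abel
    have hde : d (j + 1 + 1) e = 0 := by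
      have heq : e = d (j + 1) a + r := by rw [hda]; abel
      have hdeI : d (j + 1 + 1) e ∈ I (j + 1 + 1 + 1) := by
        rw [heq, map_add, hdd]
        simpa using hdI _ r hr
      exact hEI _ (by linarith) _ (hdE _ e he) hdeI
    obtain ⟨ε, hεE, hεe⟩ := hinj e he hde ⟨w, hdw.symm⟩
    have hdwε : d (j + 1) (w - ε) = 0 := by
      rw [map_sub, hdw, ← hεe, sub_self]
    obtain ⟨η, hηE, hdη, c, hc⟩ := hsurj (w - ε) hdwε
    refine ⟨η + ε, (E (j + 1)).add_mem hηE hεE, ⟨e, he, 0, (I _).zero_mem, ?_⟩,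
      c, -s', (I (j + 1)).neg_mem hs', ?_⟩
    · rw [map_add, hdη, ← hεe, zero_add, sub_zero]
    · have h1 : a + s' - ε = η + d j c := by rw [← hw]; exact hc
      calc a - (η + ε) = (a + s' - ε) - η - s' := by abel
        _ = (η + d j c) - η - s' := by rw [h1]
        _ = d j c + -s' := by abel
  · rintro ⟨a'', ha''E, ⟨e'', he'', r'', hr'', hda''⟩, b, s, hsI, hdiff⟩
    have hr''0 : r'' = 0 := by
      refine hEI _ (by linarith) r'' ?_ hr''
      have : r'' = e'' - d (j + 1) a'' := by rw [hda'']; abel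
      rw [this]
      exact (E _).sub_mem he'' (hdE _ a'' ha''E)
    have hda''e : d (j + 1) a'' = e'' := by rw [hda'', hr''0, sub_zero]
    have ha : a = a'' + d j b + s := by
      have := hdiff; rw [sub_eq_iff_eq_add] at this; rw [this]; abel
    have hkey : r + d (j + 1) s = e - e'' := by
      have h2 : d (j + 1) a = e'' + d (j + 1) s := by
        rw [ha, map_add, map_add, hda''e, hdd]; abel
      rw [hda, sub_eq_iff_eq_add] at h2
      rw [h2]; abel
    have hzero : r + d (j + 1) s = 0 := by
      have hEm : r + d (j + 1) s ∈ E (j + 1 + 1) := by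
        rw [hkey]; exact (E _).sub_mem he he''
      refine hEI _ (by linarith) _ hEm ?_
      exact (I _).add_mem hr (hdI _ s hsI)
    refine ⟨-s, (I _).neg_mem hsI, ?_⟩
    rw [map_neg, eq_neg_iff_add_eq_zero]
    exact hzero
end
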